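/- arXiv:2502.14379 — 4 statements merged into one kernel-verified Lean document; each statement's English description precedes it below -/
import Mathlib

section
/- Integral representation of exponential-family KL divergence: Let b : ℝ → ℝ be twice continuously differentiable with deriv² b strictly positive on the interval [θ, θ'], where θ ≤ θ'. Then b(θ') − b(θ) − (deriv b θ)·(θ' − θ) = ∫_{b'(θ)}^{b'(θ')} (x − b'(θ)) / b''((b')⁻¹(x)) dx, where b' = deriv b, b'' = deriv² b, and (b')⁻¹ denotes the inverse of b' on [θ, θ'] (which exists since b' is strictly increasing there). -/
open Set

/-- Continuity of the inverse of a continuous strictly monotone function on a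
compact interval. -/
lemma inv_continuousOn_aux {f g : ℝ → ℝ} {θ θ' : ℝ} (hθ : θ ≤ θ')
    (hf : Continuous f) (hmono : StrictMonoOn f (Icc θ θ'))
    (hg_left : ∀ x ∈ Icc θ θ', g (f x) = x) :
    ContinuousOn g (Icc (f θ) (f θ')) := by
  have hθθ : θ ∈ Icc θ θ' := ⟨le_rfl, hθ⟩
  have hθ'θ : θ' ∈ Icc θ θ' := ⟨hθ, le_rfl⟩
  have hmem : ∀ x ∈ Icc (f θ) (f θ'), g x ∈ Icc θ θ' ∧ f (g x) = x := by
    intro x hx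
    obtain ⟨t, ht, hft⟩ := intermediate_value_Icc hθ hf.continuousOn hx
    have hgt : g x = t := by rw [← hft, hg_left t ht]
    rw [hgt, ← hft]
    exact ⟨ht, rfl⟩
  have hgmono : StrictMonoOn g (Icc (f θ) (f θ')) := by
    intro x hx y hy hxy
    by_contra h
    push_neg at h
    have := hmono.monotoneOn (hmem y hy).1 (hmem x hx).1 h
    rw [(hmem x hx).2, (hmem y hy).2] at this
    exact absurd this (not_le.mpr hxy)
  have himg : Icc θ θ' ⊆ g '' Icc (f θ) (f θ') := by
    intro t ht
    exact ⟨f t, ⟨hmono.monotoneOn hθθ ht ht.1, hmono.monotoneOn ht hθ'θ ht.2⟩,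
      hg_left t ht⟩
  intro a ha
  have hga := hmem a ha
  have hR : ContinuousWithinAt g (Icc (f θ) (f θ') ∩ Ici a) a := by
    rcases eq_or_lt_of_le ha.2 with h | h
    · refine (continuousWithinAt_singleton (f := g) (x := a)).mono ?_
      rintro x ⟨hx1, hx2⟩
      have : x ≤ a := h ▸ hx1.2
      simp [le_antisymm this hx2]
    · have hganθ' : g a < θ' := by
        have := hgmono ha ⟨ha.1.trans ha.2, le_rfl⟩ h
        rwa [hg_left θ' hθ'θ] at this
      exact (hgmono.continuousWithinAt_right_of_image_mem_nhdsWithin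
        (Icc_mem_nhdsGE_of_mem ⟨ha.1, h⟩)
        (Filter.mem_of_superset (Icc_mem_nhdsGE_of_mem ⟨hga.1.1, hganθ'⟩) himg)).mono
        inter_subset_right
  have hL : ContinuousWithinAt g (Icc (f θ) (f θ') ∩ Iic a) a := by
    rcases eq_or_lt_of_le ha.1 with h | h
    · refine (continuousWithinAt_singleton (f := g) (x := a)).mono ?_
      rintro x ⟨hx1, hx2⟩
      have : a ≤ x := h ▸ hx1.1
      simp [le_antisymm hx2 this]
    · have hθgan : θ < g a := by
        have := hgmono ⟨le_rfl, ha.1.trans ha.2⟩ ha h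
        rwa [hg_left θ hθθ] at this
      exact (hgmono.continuousWithinAt_left_of_image_mem_nhdsWithin
        (Icc_mem_nhdsLE_of_mem ⟨h, ha.2⟩)
        (Filter.mem_of_superset (Icc_mem_nhdsLE_of_mem ⟨hθgan, hga.1.2⟩) himg)).mono
        inter_subset_right
  have : ContinuousWithinAt g ((Icc (f θ) (f θ') ∩ Iic a) ∪ (Icc (f θ) (f θ') ∩ Ici a)) a :=
    hL.union hR
  refine this.mono fun x hx => ?_
  rcases le_total x a with h | h
  · exact Or.inl ⟨hx, h⟩
  · exact Or.inr ⟨hx, h⟩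


/-- Integral representation of exponential-family KL divergence: for a twice
continuously differentiable `b` with strictly positive second derivative on
`[θ, θ']` (`θ ≤ θ'`), and `g` the inverse of `deriv b` on `[θ, θ']`,
`b θ' - b θ - (deriv b θ) * (θ' - θ)
  = ∫_{b'(θ)}^{b'(θ')} (x - b'(θ)) / b''(g x) dx`. -/
theorem kl_integral_representation
    (b : ℝ → ℝ) (hb : ContDiff ℝ 2 b)
    (θ θ' : ℝ) (hθ : θ ≤ θ')
    (hpos : ∀ x ∈ Set.Icc θ θ', 0 < deriv (deriv b) x)
    (g : ℝ → ℝ)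
    (hg_left : ∀ x ∈ Set.Icc θ θ', g (deriv b x) = x)
    (hg_right : ∀ y ∈ Set.Icc (deriv b θ) (deriv b θ'), deriv b (g y) = y) :
    b θ' - b θ - deriv b θ * (θ' - θ)
      = ∫ x in (deriv b θ)..(deriv b θ'),
          (x - deriv b θ) / deriv (deriv b) (g x) := by
  have hb2 : ContDiff ℝ (1 + 1) b := by
    have : ((1 : WithTop ℕ∞) + 1) = 2 := by norm_num
    rw [this]; exact hb
  have hb1 : Differentiable ℝ b := hb.differentiable (by norm_num)
  have hd : ContDiff ℝ 1 (deriv b) := (contDiff_succ_iff_deriv.mp hb2).2.2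
  have hd1 : Differentiable ℝ (deriv b) := hd.differentiable one_ne_zero
  have hf'cont : Continuous (deriv (deriv b)) := hd.continuous_deriv le_rfl
  have hfcont : Continuous (deriv b) := hd.continuous
  have hmono : StrictMonoOn (deriv b) (Set.Icc θ θ') := by
    refine strictMonoOn_of_deriv_pos (convex_Icc θ θ') hfcont.continuousOn fun x hx => ?_
    exact hpos x (interior_subset hx)
  have hθθ : θ ∈ Set.Icc θ θ' := ⟨le_rfl, hθ⟩
  have hθ'θ : θ' ∈ Set.Icc θ θ' := ⟨hθ, le_rfl⟩
  have hgcont : ContinuousOn g (Set.Icc (deriv b θ) (deriv b θ')) :=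
    inv_continuousOn_aux hθ hfcont hmono hg_left
  have hmem : ∀ x ∈ Set.Icc (deriv b θ) (deriv b θ'), g x ∈ Set.Icc θ θ' := by
    intro x hx
    obtain ⟨t, ht, hft⟩ := intermediate_value_Icc hθ hfcont.continuousOn hx
    rw [← hft, hg_left t ht]
    exact ht
  have himage : deriv b '' Set.uIcc θ θ' ⊆ Set.Icc (deriv b θ) (deriv b θ') := by
    rw [Set.uIcc_of_le hθ]
    rintro x ⟨t, ht, rfl⟩
    exact ⟨hmono.monotoneOn hθθ ht ht.1, hmono.monotoneOn ht hθ'θ ht.2⟩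
  -- change of variables
  have key : (∫ x in θ..θ', deriv (deriv b) x •
        ((fun x => (x - deriv b θ) / deriv (deriv b) (g x)) ∘ deriv b) x)
      = ∫ x in (deriv b θ)..(deriv b θ'),
          (x - deriv b θ) / deriv (deriv b) (g x) := by
    refine intervalIntegral.integral_comp_smul_deriv'
      (fun x _ => (hd1 x).hasDerivAt) hf'cont.continuousOn ?_
    refine ContinuousOn.mono ?_ himage
    refine ContinuousOn.div (by fun_prop) (hf'cont.comp_continuousOn hgcont) ?_
    intro x hx
    exact (hpos _ (hmem x hx)).ne'
  rw [← key]
  have heq : ∀ x ∈ Set.uIcc θ θ', deriv (deriv b) x •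
        ((fun x => (x - deriv b θ) / deriv (deriv b) (g x)) ∘ deriv b) x
      = deriv b x - deriv b θ := by
    intro x hx
    rw [Set.uIcc_of_le hθ] at hx
    have h1 : g (deriv b x) = x := hg_left x hx
    have h2 : deriv (deriv b) x ≠ 0 := (hpos x hx).ne'
    simp only [Function.comp_apply, h1, smul_eq_mul]
    field_simp
  rw [intervalIntegral.integral_congr heq]
  have : (∫ x in θ..θ', (deriv b x - deriv b θ))
      = (∫ x in θ..θ', deriv b x) - ∫ x in θ..θ', (deriv b θ : ℝ) := by
    exact intervalIntegral.integral_sub (hfcont.intervalIntegrable θ θ')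
      intervalIntegrable_const
  rw [this, intervalIntegral.integral_deriv_eq_sub (fun x _ => hb1 x)
    (hfcont.intervalIntegrable θ θ'), intervalIntegral.integral_const]
  simp only [smul_eq_mul]
  ring
end

section
/- KL lower bound under Lipschitz variance: Let μ < μ' be reals, Δ = μ' − μ, C_L ≥ 0, and let V : ℝ → ℝ be continuous and strictly positive on [μ, μ'] and satisfy |V(x) − V(y)| ≤ C_L·|x − y| for all x, y ∈ [μ, μ']. Then ∫_μ^{μ'} (x − μ)/V(x) dx ≥ (1/2)·max( Δ²/(V(μ) + C_L·Δ), Δ²/(V(μ') + C_L·Δ) ). -/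
/-- KL lower bound under Lipschitz variance: if `V` is continuous, strictly
positive and `C_L`-Lipschitz on `[μ, μ']` with `μ < μ'` and `Δ = μ' - μ`, then
`∫_μ^{μ'} (x - μ)/V x dx ≥ (1/2) * max (Δ²/(V μ + C_L Δ)) (Δ²/(V μ' + C_L Δ))`. -/
theorem kl_lower_bound_lipschitz_variance
    (μ μ' Δ CL : ℝ) (hμ : μ < μ') (hΔ : Δ = μ' - μ) (hCL : 0 ≤ CL)
    (V : ℝ → ℝ)
    (hVcont : ContinuousOn V (Set.Icc μ μ'))
    (hVpos : ∀ x ∈ Set.Icc μ μ', 0 < V x)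
    (hVlip : ∀ x ∈ Set.Icc μ μ', ∀ y ∈ Set.Icc μ μ',
      |V x - V y| ≤ CL * |x - y|) :
    (1 / 2) * max (Δ ^ 2 / (V μ + CL * Δ)) (Δ ^ 2 / (V μ' + CL * Δ))
      ≤ ∫ x in μ..μ', (x - μ) / V x := by
  subst hΔ
  have hμle : μ ≤ μ' := hμ.le
  have hΔpos : 0 < μ' - μ := sub_pos.mpr hμ
  have hmem : μ ∈ Set.Icc μ μ' := ⟨le_refl _, hμle⟩
  have hmem' : μ' ∈ Set.Icc μ μ' := ⟨hμle, le_refl _⟩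
  have hB1 : 0 < V μ + CL * (μ' - μ) :=
    add_pos_of_pos_of_nonneg (hVpos μ hmem) (mul_nonneg hCL hΔpos.le)
  have hB2 : 0 < V μ' + CL * (μ' - μ) :=
    add_pos_of_pos_of_nonneg (hVpos μ' hmem') (mul_nonneg hCL hΔpos.le)
  have hVB1 : ∀ x ∈ Set.Icc μ μ', V x ≤ V μ + CL * (μ' - μ) := by
    intro x hx
    have h : V x - V μ ≤ CL * (μ' - μ) := by
      calc V x - V μ ≤ |V x - V μ| := le_abs_self _
        _ ≤ CL * |x - μ| := hVlip x hx μ hmem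
        _ ≤ CL * (μ' - μ) := by
            apply mul_le_mul_of_nonneg_left _ hCL
            rw [abs_of_nonneg (sub_nonneg.mpr hx.1)]
            linarith [hx.2]
    linarith
  have hVB2 : ∀ x ∈ Set.Icc μ μ', V x ≤ V μ' + CL * (μ' - μ) := by
    intro x hx
    have h : V x - V μ' ≤ CL * (μ' - μ) := by
      calc V x - V μ' ≤ |V x - V μ'| := le_abs_self _
        _ ≤ CL * |x - μ'| := hVlip x hx μ' hmem'
        _ ≤ CL * (μ' - μ) := by
            apply mul_le_mul_of_nonneg_left _ hCL
            rw [abs_of_nonpos (sub_nonpos.mpr hx.2)]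
            linarith [hx.1]
    linarith
  have hcont : ContinuousOn (fun x => (x - μ) / V x) (Set.Icc μ μ') :=
    (continuousOn_id.sub continuousOn_const).div hVcont (fun x hx => (hVpos x hx).ne')
  have hint : IntervalIntegrable (fun x => (x - μ) / V x) MeasureTheory.volume μ μ' := by
    apply ContinuousOn.intervalIntegrable
    rwa [Set.uIcc_of_le hμle]
  have key : ∀ B : ℝ, 0 < B → (∀ x ∈ Set.Icc μ μ', V x ≤ B) →
      (μ' - μ) ^ 2 / (2 * B) ≤ ∫ x in μ..μ', (x - μ) / V x := by
    intro B hB hVB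
    have h1 : (∫ x in μ..μ', (x - μ) / B) = (μ' - μ) ^ 2 / (2 * B) := by
      have h2 : (∫ x in μ..μ', (x - μ)) = (μ' - μ) ^ 2 / 2 := by
        rw [intervalIntegral.integral_comp_sub_right (fun x => x) μ,
          integral_id]
        ring
      rw [intervalIntegral.integral_div, h2, div_div]
    rw [← h1]
    apply intervalIntegral.integral_mono_on hμle _ hint
    · intro x hx
      have hx0 : 0 ≤ x - μ := sub_nonneg.mpr hx.1
      exact div_le_div_of_nonneg_left hx0 (hVpos x hx) (hVB x hx)
    · exact (Continuous.intervalIntegrable (by continuity) μ μ')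
  have hA := key (V μ + CL * (μ' - μ)) hB1 hVB1
  have hBk := key (V μ' + CL * (μ' - μ)) hB2 hVB2
  have e1 : (1 / 2 : ℝ) * ((μ' - μ) ^ 2 / (V μ + CL * (μ' - μ)))
      = (μ' - μ) ^ 2 / (2 * (V μ + CL * (μ' - μ))) := by
    rw [div_mul_div_comm, one_mul]
  have e2 : (1 / 2 : ℝ) * ((μ' - μ) ^ 2 / (V μ' + CL * (μ' - μ)))
      = (μ' - μ) ^ 2 / (2 * (V μ' + CL * (μ' - μ))) := by
    rw [div_mul_div_comm, one_mul]
  rw [mul_max_of_nonneg _ _ (by norm_num : (0:ℝ) ≤ 1/2), e1, e2]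
  exact max_le hA hBk
end

section
/- Geometric-log sum bound: Let T be a positive natural number and let a be a real number with a > 1/T. Then ∑_{k=1}^{T} exp(−k·a)·log(T/k) ≤ 5·log(max(T·a, e)) / a, where log denotes the natural logarithm and e = exp 1. -/
open Real Finset

lemma sum_one_div_sqrt_le (K : ℕ) :
    ∑ k ∈ Finset.Icc 1 K, 1 / Real.sqrt k ≤ 2 * Real.sqrt K := by
  induction K with
  | zero => simp
  | succ n ih =>
    rw [Finset.sum_Icc_succ_top (by omega)]
    have hs : Real.sqrt n ^ 2 = (n : ℝ) := Real.sq_sqrt (by positivity)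
    have ht : Real.sqrt ((n : ℝ) + 1) ^ 2 = (n : ℝ) + 1 := Real.sq_sqrt (by positivity)
    have hs0 : 0 ≤ Real.sqrt n := Real.sqrt_nonneg _
    have ht0 : 0 < Real.sqrt ((n : ℝ) + 1) := Real.sqrt_pos.2 (by positivity)
    have hstep : 1 / Real.sqrt ((n : ℝ) + 1)
        ≤ 2 * Real.sqrt ((n : ℝ) + 1) - 2 * Real.sqrt n := by
      rw [div_le_iff₀ ht0]
      nlinarith [sq_nonneg (Real.sqrt ((n : ℝ) + 1) - Real.sqrt n)]
    push_cast
    linarith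

/-- Geometric-log sum bound: for `T ∈ ℕ⁺` and real `a > 1/T`,
`∑_{k=1}^{T} exp(-k a) * log(T/k) ≤ 5 * log(max (T a) e) / a`. -/
theorem geo_log_sum_bound
    (T : ℕ) (hT : 0 < T) (a : ℝ) (ha : 1 / (T : ℝ) < a) :
    ∑ k ∈ Finset.Icc 1 T, Real.exp (-(k : ℝ) * a) * Real.log ((T : ℝ) / k)
      ≤ 5 * Real.log (max ((T : ℝ) * a) (Real.exp 1)) / a := by
  classical
  have hT0 : (0 : ℝ) < T := by exact_mod_cast hT
  have ha0 : 0 < a := lt_trans (by positivity) ha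
  set L := Real.log (max ((T : ℝ) * a) (Real.exp 1)) with hLdef
  have hL1 : 1 ≤ L := by
    have := Real.log_le_log (Real.exp_pos 1) (le_max_right ((T : ℝ) * a) (Real.exp 1))
    rwa [Real.log_exp] at this
  -- per-term bound
  have key : ∀ k ∈ Finset.Icc 1 T,
      Real.exp (-(k : ℝ) * a) * Real.log ((T : ℝ) / k)
        ≤ Real.exp (-(k : ℝ) * a) * L
          + (if (k : ℝ) * a < 1 then 2 / Real.sqrt ((k : ℝ) * a) else 0) := by
    intro k hk
    obtain ⟨hk1, hkT⟩ := Finset.mem_Icc.mp hk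
    have hk0 : (0 : ℝ) < k := by exact_mod_cast hk1
    have hexp0 : 0 < Real.exp (-(k : ℝ) * a) := Real.exp_pos _
    have hexp1 : Real.exp (-(k : ℝ) * a) ≤ 1 := by
      apply Real.exp_le_one_iff.mpr
      nlinarith
    have hTaL : Real.log ((T : ℝ) * a) ≤ L :=
      Real.log_le_log (by positivity) (le_max_left _ _)
    have hsplit : Real.log ((T : ℝ) / k)
        = Real.log ((T : ℝ) * a) - Real.log ((k : ℝ) * a) := by
      rw [Real.log_div (ne_of_gt hT0) (ne_of_gt hk0),
        Real.log_mul (ne_of_gt hT0) (ne_of_gt ha0),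
        Real.log_mul (ne_of_gt hk0) (ne_of_gt ha0)]
      ring
    by_cases hcase : (k : ℝ) * a < 1
    · have hx : 0 < (k : ℝ) * a := by positivity
      have hsq0 : 0 < Real.sqrt ((k : ℝ) * a) := Real.sqrt_pos.2 hx
      -- -log(ka) ≤ 2/√(ka)
      have hlogle : -Real.log ((k : ℝ) * a) ≤ 2 / Real.sqrt ((k : ℝ) * a) := by
        have h1 : Real.log (Real.sqrt ((k : ℝ) * a)) = Real.log ((k : ℝ) * a) / 2 :=
          Real.log_sqrt (le_of_lt hx)
        have h2 : Real.log (Real.sqrt ((k : ℝ) * a))⁻¹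
            ≤ (Real.sqrt ((k : ℝ) * a))⁻¹ - 1 :=
          Real.log_le_sub_one_of_pos (by positivity)
        rw [Real.log_inv, h1] at h2
        have : (Real.sqrt ((k : ℝ) * a))⁻¹ = 1 / Real.sqrt ((k : ℝ) * a) := by
          rw [one_div]
        rw [this] at h2
        have h2' := mul_le_mul_of_nonneg_right h2 (le_of_lt hsq0)
        have hinv : (1 / Real.sqrt ((k : ℝ) * a)) * Real.sqrt ((k : ℝ) * a) = 1 := by
          field_simp
        rw [le_div_iff₀ hsq0]
        nlinarith [Real.sqrt_nonneg ((k : ℝ) * a)]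
      have hlog_le : Real.log ((T : ℝ) / k) ≤ L + 2 / Real.sqrt ((k : ℝ) * a) := by
        rw [hsplit]; linarith
      rw [if_pos hcase]
      calc Real.exp (-(k : ℝ) * a) * Real.log ((T : ℝ) / k)
          ≤ Real.exp (-(k : ℝ) * a) * (L + 2 / Real.sqrt ((k : ℝ) * a)) := by
            exact mul_le_mul_of_nonneg_left hlog_le (le_of_lt hexp0)
        _ = Real.exp (-(k : ℝ) * a) * L
            + Real.exp (-(k : ℝ) * a) * (2 / Real.sqrt ((k : ℝ) * a)) := by ring
        _ ≤ Real.exp (-(k : ℝ) * a) * L + 2 / Real.sqrt ((k : ℝ) * a) := by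
            have : Real.exp (-(k : ℝ) * a) * (2 / Real.sqrt ((k : ℝ) * a))
                ≤ 1 * (2 / Real.sqrt ((k : ℝ) * a)) :=
              mul_le_mul_of_nonneg_right hexp1 (by positivity)
            linarith
    · push_neg at hcase
      have hlogka : 0 ≤ Real.log ((k : ℝ) * a) := Real.log_nonneg hcase
      have hlog_le : Real.log ((T : ℝ) / k) ≤ L := by rw [hsplit]; linarith
      rw [if_neg (not_lt.mpr hcase)]
      have := mul_le_mul_of_nonneg_left hlog_le (le_of_lt hexp0)
      linarith
  have hsum := Finset.sum_le_sum key
  rw [Finset.sum_add_distrib] at hsum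
  -- geometric sum bound
  have hgeom : ∑ k ∈ Finset.Icc 1 T, Real.exp (-(k : ℝ) * a) ≤ 1 / a := by
    have hr0 : 0 < Real.exp (-a) := Real.exp_pos _
    have hr1 : Real.exp (-a) < 1 := Real.exp_lt_one_iff.mpr (by linarith)
    have hrw : ∀ k ∈ Finset.Icc 1 T,
        Real.exp (-(k : ℝ) * a) = Real.exp (-a) ^ k := by
      intro k _
      rw [← Real.exp_nat_mul]
      ring_nf
    rw [Finset.sum_congr rfl hrw]
    have hrange : ∑ k ∈ Finset.Icc 1 T, Real.exp (-a) ^ k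
        = Real.exp (-a) * ∑ i ∈ Finset.range T, Real.exp (-a) ^ i := by
      rw [← Finset.Ico_add_one_right_eq_Icc, Finset.sum_Ico_eq_sum_range, Finset.mul_sum]
      apply Finset.sum_congr (by simp)
      intro i _
      rw [pow_add, pow_one]
    rw [hrange]
    have hgs : ∑ i ∈ Finset.range T, Real.exp (-a) ^ i ≤ 1 / (1 - Real.exp (-a)) := by
      have h := geom_sum_mul (Real.exp (-a)) T
      have hne : 0 < 1 - Real.exp (-a) := by linarith
      rw [le_div_iff₀ hne]
      nlinarith [pow_pos hr0 T,
        (geom_sum_mul (Real.exp (-a)) T),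
        Finset.sum_nonneg (fun i (_ : i ∈ Finset.range T) => le_of_lt (pow_pos hr0 i))]
    have hfinal : Real.exp (-a) * (1 / (1 - Real.exp (-a))) ≤ 1 / a := by
      have hne : 0 < 1 - Real.exp (-a) := by linarith
      rw [mul_one_div, div_le_div_iff₀ hne ha0]
      have hexp : Real.exp (-a) * Real.exp a = 1 := by
        rw [← Real.exp_add]; simp
      have hbound : a + 1 ≤ Real.exp a := Real.add_one_le_exp a
      nlinarith [mul_le_mul_of_nonneg_left hbound (le_of_lt (Real.exp_pos (-a))), hexp]
    calc Real.exp (-a) * ∑ i ∈ Finset.range T, Real.exp (-a) ^ i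
        ≤ Real.exp (-a) * (1 / (1 - Real.exp (-a))) :=
          mul_le_mul_of_nonneg_left hgs (le_of_lt hr0)
      _ ≤ 1 / a := hfinal
  -- filtered sqrt sum bound
  have hite : ∑ k ∈ Finset.Icc 1 T,
      (if (k : ℝ) * a < 1 then 2 / Real.sqrt ((k : ℝ) * a) else 0) ≤ 4 / a := by
    set K := Nat.floor (1 / a) with hKdef
    have hKa : (K : ℝ) ≤ 1 / a := Nat.floor_le (by positivity)
    rw [← Finset.sum_filter]
    have hsub : (Finset.Icc 1 T).filter (fun k : ℕ => (k : ℝ) * a < 1)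
        ⊆ Finset.Icc 1 K := by
      intro k hk
      rw [Finset.mem_filter, Finset.mem_Icc] at hk
      obtain ⟨⟨h1, _⟩, h2⟩ := hk
      rw [Finset.mem_Icc]
      refine ⟨h1, Nat.le_floor ?_⟩
      rw [le_div_iff₀ ha0]
      exact le_of_lt h2
    have hmono : ∑ k ∈ (Finset.Icc 1 T).filter (fun k : ℕ => (k : ℝ) * a < 1),
        2 / Real.sqrt ((k : ℝ) * a)
        ≤ ∑ k ∈ Finset.Icc 1 K, 2 / Real.sqrt ((k : ℝ) * a) :=
      Finset.sum_le_sum_of_subset_of_nonneg hsub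
        (fun k _ _ => by positivity)
    have heq : ∀ k ∈ Finset.Icc 1 K,
        2 / Real.sqrt ((k : ℝ) * a) = (2 / Real.sqrt a) * (1 / Real.sqrt k) := by
      intro k hk
      obtain ⟨hk1, _⟩ := Finset.mem_Icc.mp hk
      have hk0 : (0 : ℝ) ≤ k := by positivity
      rw [Real.sqrt_mul hk0]
      have h1 : Real.sqrt k ≠ 0 := by
        have : (0:ℝ) < k := by exact_mod_cast hk1
        positivity
      have h2 : Real.sqrt a ≠ 0 := by positivity
      field_simp
    have hbound : ∑ k ∈ Finset.Icc 1 K, 2 / Real.sqrt ((k : ℝ) * a) ≤ 4 / a := by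
      rw [Finset.sum_congr rfl heq, ← Finset.mul_sum]
      have h1 : (2 / Real.sqrt a) * ∑ k ∈ Finset.Icc 1 K, 1 / Real.sqrt k
          ≤ (2 / Real.sqrt a) * (2 * Real.sqrt K) :=
        mul_le_mul_of_nonneg_left (sum_one_div_sqrt_le K) (by positivity)
      have hsa : 0 < Real.sqrt a := Real.sqrt_pos.2 ha0
      have h2 : Real.sqrt (K : ℝ) ≤ 1 / Real.sqrt a := by
        rw [show (1 : ℝ) / Real.sqrt a = Real.sqrt (1 / a) by
          rw [one_div, one_div, Real.sqrt_inv]]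
        exact Real.sqrt_le_sqrt hKa
      have h3 : (2 / Real.sqrt a) * (2 * Real.sqrt K)
          ≤ (2 / Real.sqrt a) * (2 * (1 / Real.sqrt a)) := by
        apply mul_le_mul_of_nonneg_left _ (by positivity)
        linarith
      have h4 : (2 / Real.sqrt a) * (2 * (1 / Real.sqrt a)) = 4 / a := by
        have hss : Real.sqrt a * Real.sqrt a = a := Real.mul_self_sqrt (le_of_lt ha0)
        conv_rhs => rw [← hss]
        ring
      linarith
    linarith
  -- combine
  have hL0 : 0 < L := lt_of_lt_of_le one_pos hL1
  have hsum1 : ∑ k ∈ Finset.Icc 1 T, Real.exp (-(k : ℝ) * a) * L ≤ L / a := by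
    rw [← Finset.sum_mul]
    calc (∑ k ∈ Finset.Icc 1 T, Real.exp (-(k : ℝ) * a)) * L ≤ (1 / a) * L :=
          mul_le_mul_of_nonneg_right hgeom (le_of_lt hL0)
      _ = L / a := by ring
  have h4L : 4 / a ≤ 4 * L / a := by
    rw [div_le_div_iff₀ ha0 ha0]
    nlinarith
  calc ∑ k ∈ Finset.Icc 1 T, Real.exp (-(k : ℝ) * a) * Real.log ((T : ℝ) / k)
      ≤ _ := hsum
    _ ≤ L / a + 4 / a := by linarith
    _ ≤ L / a + 4 * L / a := by linarith
    _ = 5 * L / a := by ring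
end

section
/- Double-exponential series bound: For every real c > 0, ∑_{n=0}^{∞} exp(−n − c·exp(−(n+1))) ≤ 5/c. -/
open Real Finset

private lemma key_u (a : ℝ) (ha : a = 1 - Real.exp (-1)) (u : ℝ) (hu : 0 ≤ u) :
    a * u * Real.exp (-u) ≤ Real.exp (-(u * Real.exp (-1))) - Real.exp (-u) := by
  have h1 : Real.exp (-(u * Real.exp (-1))) = Real.exp (-u) * Real.exp (a * u) := by
    rw [← Real.exp_add, ha]; ring_nf
  rw [h1]
  have h2 : a * u + 1 ≤ Real.exp (a * u) := Real.add_one_le_exp _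
  have h3 : 0 < Real.exp (-u) := Real.exp_pos _
  nlinarith

/-- Double-exponential series bound: for real `c > 0`,
`∑_{n=0}^{∞} exp(-n - c exp(-(n+1))) ≤ 5/c`. -/
theorem double_exp_series_bound (c : ℝ) (hc : 0 < c) :
    ∑' n : ℕ, Real.exp (-(n : ℝ) - c * Real.exp (-((n : ℝ) + 1))) ≤ 5 / c := by
  have e1 : (0:ℝ) < Real.exp 1 := Real.exp_pos 1
  set a : ℝ := 1 - Real.exp (-1) with ha
  have he1 : Real.exp (-1) < 1 := by
    rw [Real.exp_lt_one_iff]; norm_num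
  have ha0 : 0 < a := by simp only [ha]; linarith
  set f : ℕ → ℝ := fun n => Real.exp (-(n : ℝ) - c * Real.exp (-((n : ℝ) + 1))) with hf
  set G : ℕ → ℝ := fun n => Real.exp 1 / c * Real.exp (-(c * Real.exp (-((n : ℝ) + 1)))) with hG
  have hfpos : ∀ n, 0 ≤ f n := fun n => (Real.exp_pos _).le
  -- summability
  have hsum : Summable f := by
    have hle : ∀ n : ℕ, f n ≤ Real.exp (-1) ^ n := by
      intro n
      have h1 : f n ≤ Real.exp (-(n:ℝ)) := by
        apply Real.exp_le_exp.2
        have : 0 ≤ c * Real.exp (-((n : ℝ) + 1)) :=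
          le_of_lt (mul_pos hc (Real.exp_pos _))
        linarith
      have h2 : Real.exp (-(n:ℝ)) = Real.exp (-1) ^ n := by
        rw [← Real.exp_nat_mul]; ring_nf
      linarith [h2.le]
    exact Summable.of_nonneg_of_le hfpos hle
      (summable_geometric_of_lt_one (Real.exp_pos _).le he1)
  -- key telescoping inequality
  have key : ∀ n : ℕ, a * f n ≤ G (n+1) - G n := by
    intro n
    set u : ℝ := c * Real.exp (-((n : ℝ) + 1)) with hu
    have hu0 : 0 < u := mul_pos hc (Real.exp_pos _)
    have hexpn : Real.exp (-(n:ℝ)) = Real.exp 1 * u / c := by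
      rw [hu, mul_div_assoc, mul_div_cancel_left₀ _ (ne_of_gt hc), ← Real.exp_add]
      congr 1
      ring
    have hfn : f n = Real.exp 1 * u / c * Real.exp (-u) := by
      rw [hf]
      simp only
      rw [sub_eq_add_neg, Real.exp_add, hexpn, ← hu]
    have hG1 : G (n+1) = Real.exp 1 / c * Real.exp (-(u * Real.exp (-1))) := by
      rw [hG]
      simp only
      congr 2
      rw [hu]
      push_cast
      rw [mul_assoc, ← Real.exp_add]
      ring_nf
    have hGn : G n = Real.exp 1 / c * Real.exp (-u) := by rw [hG]
    rw [hfn, hG1, hGn]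
    have hk := key_u a ha u hu0.le
    have hec : 0 < Real.exp 1 / c := div_pos e1 hc
    calc a * (Real.exp 1 * u / c * Real.exp (-u))
        = Real.exp 1 / c * (a * u * Real.exp (-u)) := by ring
      _ ≤ Real.exp 1 / c * (Real.exp (-(u * Real.exp (-1))) - Real.exp (-u)) := by
          exact mul_le_mul_of_nonneg_left hk hec.le
      _ = Real.exp 1 / c * Real.exp (-(u * Real.exp (-1))) - Real.exp 1 / c * Real.exp (-u) := by
          ring
  -- partial sums bounded
  have bound : ∀ s : Finset ℕ, ∑ n ∈ s, f n ≤ 5 / c := by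
    intro s
    obtain ⟨N, hN⟩ := s.exists_nat_subset_range
    have h1 : ∑ n ∈ s, f n ≤ ∑ n ∈ Finset.range N, f n :=
      Finset.sum_le_sum_of_subset_of_nonneg hN (fun i _ _ => hfpos i)
    have h2 : a * ∑ n ∈ Finset.range N, f n ≤ G N - G 0 := by
      rw [Finset.mul_sum, ← Finset.sum_range_sub G]
      exact Finset.sum_le_sum (fun i _ => key i)
    have hGN : G N ≤ Real.exp 1 / c := by
      rw [hG]
      simp only
      have : Real.exp (-(c * Real.exp (-((N : ℝ) + 1)))) ≤ 1 := by
        apply Real.exp_le_one_iff.2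
        have : 0 ≤ c * Real.exp (-((N : ℝ) + 1)) := le_of_lt (mul_pos hc (Real.exp_pos _))
        linarith
      nlinarith [div_pos e1 hc]
    have hG0 : 0 ≤ G 0 := by
      rw [hG]
      positivity
    have h3 : ∑ n ∈ Finset.range N, f n ≤ Real.exp 1 / (a * c) := by
      rw [le_div_iff₀ (mul_pos ha0 hc)]
      have : G N - G 0 ≤ Real.exp 1 / c := by linarith
      calc (∑ n ∈ Finset.range N, f n) * (a * c)
          = (a * ∑ n ∈ Finset.range N, f n) * c := by ring
        _ ≤ (Real.exp 1 / c) * c :=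
            mul_le_mul_of_nonneg_right (h2.trans this) hc.le
        _ = Real.exp 1 := by field_simp
    have h4 : Real.exp 1 / (a * c) ≤ 5 / c := by
      have hlo : 2.7 < Real.exp 1 := by
        have := Real.exp_one_gt_d9
        linarith
      have hhi : Real.exp 1 < 2.7182818286 := Real.exp_one_lt_d9
      have h5 : Real.exp 1 * Real.exp 1 + 5 ≤ 5 * Real.exp 1 := by nlinarith
      have hinvmul : (1 / Real.exp 1) * Real.exp 1 = 1 := by field_simp
      have hea : Real.exp 1 ≤ 5 * a := by
        rw [ha, Real.exp_neg, inv_eq_one_div]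
        nlinarith
      rw [div_le_div_iff₀ (mul_pos ha0 hc) hc]
      nlinarith [mul_le_mul_of_nonneg_right hea hc.le]
    linarith
  exact Summable.tsum_le_of_sum_le hsum bound
end
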